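/- arXiv:1902.10012 — 3 statements merged into one kernel-verified Lean document; each statement's English description precedes it below -/
import Mathlib

section
/- Let π be a group, 𝔸 a normal subgroup of π, and (K_m)_{m≥1} the associated N-series (K_1 = π, K_2 = 𝔸 ⊔ Γ_2π, K_m = [K_{m−1}, K_1] ⊔ [K_{m−2}, K_2] for m ≥ 3). Then for every m ≥ 1 there exists a subgroup N_m of π which is normal in π and contained in 𝔸 such that K_m = Γ_mπ ⊔ N_m. -/
variable {π : Type*} [Group π]

/-- The series `(K_m)` associated to a (normal) subgroup `𝔸 = A` of `π`:
`K_1 = π`, `K_2 = 𝔸 ⊔ Γ₂π` and `K_m = [K_{m-1}, K_1] ⊔ [K_{m-2}, K_2]` for `m ≥ 3`.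
Here `Γ_m π = (⊤ : Subgroup π).lowerCentralSeries (m-1)`.  The value at `0` is a junk value `⊤`. -/
def altK (A : Subgroup π) : ℕ → Subgroup π
  | 0 => ⊤
  | 1 => ⊤
  | 2 => A ⊔ (⊤ : Subgroup π).lowerCentralSeries 1
  | (m + 3) => ⁅altK A (m + 2), altK A 1⁆ ⊔ ⁅altK A (m + 1), altK A 2⁆

/-!
Induction on `m`, two steps at a time. Substituting `K_j = Γ_j ⊔ N_j` into
`[K_{m-1}, K_1] ⊔ [K_{m-2}, K_2]` and distributing commutators of normal subgroups over joins
leaves `Γ_m`, the term `[Γ_{m-2}, Γ_2]`, which lies in `Γ_m` by the three subgroups lemma, and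
commutators each involving `𝔸` or some `N_j`. The latter are normal and contained in `𝔸`; their
join is `N_m`.
-/

namespace Subgroup

variable {G : Type*} [Group G]

theorem commutator_commutator_le_of_rotate {H₁ H₂ H₃ N : Subgroup G} [N.Normal]
    (h1 : ⁅⁅H₂, H₃⁆, H₁⁆ ≤ N) (h2 : ⁅⁅H₃, H₁⁆, H₂⁆ ≤ N) : ⁅⁅H₁, H₂⁆, H₃⁆ ≤ N := by
  rw [← QuotientGroup.ker_mk' N, ← map_eq_bot_iff, map_commutator, map_commutator] at h1 h2 ⊢
  exact commutator_commutator_eq_bot_of_rotate h1 h2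

open scoped commutatorElement in
theorem commutator_sup_left (H K L : Subgroup G) [K.Normal] [L.Normal] :
    ⁅H ⊔ K, L⁆ = ⁅H, L⁆ ⊔ ⁅K, L⁆ := by
  refine le_antisymm ?_ (sup_le (commutator_mono le_sup_left le_rfl)
    (commutator_mono le_sup_right le_rfl))
  rw [commutator_le]
  intro g hg l hl
  rw [← SetLike.mem_coe, mul_normal] at hg
  obtain ⟨h, hh, k, hk, rfl⟩ := hg
  have expand : ⁅h * k, l⁆ = h * ⁅k, l⁆ * h⁻¹ * ⁅h, l⁆ := by
    simp only [commutatorElement_def]; group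
  rw [expand]
  exact mul_mem
    (mem_sup_right (Normal.conj_mem inferInstance _ (commutator_mem_commutator hk hl) h))
    (mem_sup_left (commutator_mem_commutator hh hl))

theorem commutator_sup_right (H K L : Subgroup G) [H.Normal] [L.Normal] :
    ⁅H, K ⊔ L⁆ = ⁅H, K⁆ ⊔ ⁅H, L⁆ := by
  rw [commutator_comm, commutator_sup_left, commutator_comm K, commutator_comm L]

theorem commutator_lowerCentralSeries_le (S : Subgroup G) [S.Normal] (i j : ℕ) :
    ⁅S.lowerCentralSeries i, S.lowerCentralSeries j⁆ ≤ S.lowerCentralSeries (i + j + 1) := by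
  induction j generalizing i with
  | zero => rfl
  | succ j ih =>
    rw [lowerCentralSeries_succ, commutator_comm]
    refine commutator_commutator_le_of_rotate ?_ ?_
    · rw [commutator_comm S, ← lowerCentralSeries_succ]
      exact (ih (i + 1)).trans_eq (by ring_nf)
    · exact commutator_mono (ih i) le_rfl

end Subgroup

open Subgroup

theorem altK_one (A : Subgroup π) : altK A 1 = ⊤ := by
  rw [altK]

theorem altK_two (A : Subgroup π) : altK A 2 = A ⊔ (⊤ : Subgroup π).lowerCentralSeries 1 := by
  rw [altK]

def altN (A : Subgroup π) : ℕ → Subgroup π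
  | 0 => ⊥
  | 1 => ⊥
  | 2 => A
  | (m + 3) =>
    ⁅altN A (m + 2), ⊤⁆ ⊔ ⁅(⊤ : Subgroup π).lowerCentralSeries m, A⁆ ⊔ ⁅altN A (m + 1), altK A 2⁆

variable (A : Subgroup π) [A.Normal]

instance altN_normal : ∀ m, (altN A m).Normal
  | 0 | 1 | 2 => by rw [altN]; infer_instance
  | m + 3 => by
    have := altN_normal (m + 2)
    have := altN_normal (m + 1)
    rw [altN, altK_two]
    infer_instance

theorem altN_le : ∀ m, altN A m ≤ A
  | 0 | 1 => by rw [altN]; exact bot_le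
  | 2 => by rw [altN]
  | m + 3 => by
    rw [altN]
    exact sup_le (sup_le ((commutator_le_left _ _).trans (altN_le (m + 2)))
      (commutator_le_right _ _)) ((commutator_le_left _ _).trans (altN_le (m + 1)))

theorem altK_succ_eq_sup :
    ∀ m, altK A (m + 1) = (⊤ : Subgroup π).lowerCentralSeries m ⊔ altN A (m + 1)
  | 0 => by rw [altK, altN, sup_bot_eq]; rfl
  | 1 => by rw [altK, altN, sup_comm]
  | m + 2 => by
    have hΓ : ⁅(⊤ : Subgroup π).lowerCentralSeries m, (⊤ : Subgroup π).lowerCentralSeries 1⁆ ≤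
        (⊤ : Subgroup π).lowerCentralSeries (m + 2) :=
      commutator_lowerCentralSeries_le ⊤ m 1
    rw [altK, altK_one, altK_succ_eq_sup (m + 1), altK_succ_eq_sup m, altN, altK_two,
      commutator_sup_left, commutator_sup_left, commutator_sup_right,
      ← Subgroup.lowerCentralSeries_succ]
    conv_rhs => rw [← sup_eq_left.mpr hΓ]
    ac_rfl

/-- For every m ≥ 1 there is a normal subgroup N of π contained in 𝔸 with
K_m = Γ_m π ⊔ N  (Γ_m π is lowerCentralSeries π (m-1)). -/
theorem stmt4 (π : Type*) [Group π] (A : Subgroup π) (hA : A.Normal) :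
    ∀ m : ℕ, 1 ≤ m → ∃ N : Subgroup π, N.Normal ∧ N ≤ A ∧
      altK A m = (⊤ : Subgroup π).lowerCentralSeries (m - 1) ⊔ N := by
  rintro (_ | m) hm
  · omega
  · exact ⟨altN A (m + 1), inferInstance, altN_le A _, altK_succ_eq_sup A m⟩
end

section
/- Let π be a group, 𝔸 a normal subgroup of π, and (K_m)_{m≥1} the associated N-series (K_1 = π, K_2 = 𝔸 ⊔ Γ_2π, K_m = [K_{m−1}, K_1] ⊔ [K_{m−2}, K_2] for m ≥ 3). Assume π is residually nilpotent, i.e. ⋂_{m≥1} Γ_mπ = {1}. If φ is an automorphism of π such that φ(x)x⁻¹ ∈ K_{m+1} for every m ≥ 1 and every x ∈ π, then φ is the identity automorphism of π. (This is the group-theoretic core of the statement ⋂_{m≥1} J^𝔞_mℳ = {Id_Σ} of the alternative Johnson filtration.) -/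
/-!
Each `K_m` lies in `Γ_⌈m/2⌉ π`: both commutator terms defining `K_m` raise the lower-central
index of their first factor by one. Hence `φ(x)x⁻¹ ∈ K_{2k+2} ≤ Γ_{k+1} π` for every `k`, and
residual nilpotence forces `φ(x) = x`.
-/

variable {π : Type*} [Group π]

lemma Subgroup.commutator_le_lowerCentralSeries_of_le {H : Subgroup π} (K : Subgroup π)
    {k j : ℕ} (hH : H ≤ (⊤ : Subgroup π).lowerCentralSeries k) (hj : j ≤ k + 1) :
    ⁅H, K⁆ ≤ (⊤ : Subgroup π).lowerCentralSeries j :=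
  calc ⁅H, K⁆ ≤ ⁅(⊤ : Subgroup π).lowerCentralSeries k, ⊤⁆ := commutator_mono hH le_top
    _ = (⊤ : Subgroup π).lowerCentralSeries (k + 1) := (lowerCentralSeries_succ _ _).symm
    _ ≤ (⊤ : Subgroup π).lowerCentralSeries j := lowerCentralSeries_antitone _ hj

lemma altK_le_lowerCentralSeries (A : Subgroup π) :
    ∀ m : ℕ, altK A m ≤ (⊤ : Subgroup π).lowerCentralSeries ((m - 1) / 2)
  | 0 | 1 | 2 => by simp
  | m + 3 => by
      rw [altK]
      exact sup_le
        (Subgroup.commutator_le_lowerCentralSeries_of_le _ (altK_le_lowerCentralSeries A (m + 2))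
          (by omega))
        (Subgroup.commutator_le_lowerCentralSeries_of_le _ (altK_le_lowerCentralSeries A (m + 1))
          (by omega))

theorem stmt5_general (π : Type*) [Group π] (A : Subgroup π)
    (hres : (⨅ m : ℕ, (⊤ : Subgroup π).lowerCentralSeries m) = ⊥)
    (φ : π ≃* π)
    (hφ : ∀ m : ℕ, 1 ≤ m → ∀ x : π, φ x * x⁻¹ ∈ altK A (m + 1)) :
    ∀ x : π, φ x = x := by
  intro x
  have hmem : φ x * x⁻¹ ∈ ⨅ k : ℕ, (⊤ : Subgroup π).lowerCentralSeries k := by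
    refine Subgroup.mem_iInf.2 fun k => ?_
    have h := altK_le_lowerCentralSeries A (2 * k + 2) (hφ (2 * k + 1) le_add_self x)
    rwa [show (2 * k + 2 - 1) / 2 = k by omega] at h
  rw [hres, Subgroup.mem_bot] at hmem
  exact mul_inv_eq_one.mp hmem

/-- If π is residually nilpotent and φ is an automorphism of π with φ(x)x⁻¹ ∈ K_{m+1}
for every m ≥ 1 and every x ∈ π, then φ is the identity. -/
theorem stmt5 (π : Type*) [Group π] (A : Subgroup π) (hA : A.Normal)
    (hres : (⨅ m : ℕ, (⊤ : Subgroup π).lowerCentralSeries m) = ⊥)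
    (φ : π ≃* π)
    (hφ : ∀ m : ℕ, 1 ≤ m → ∀ x : π, φ x * x⁻¹ ∈ altK A (m + 1)) :
    ∀ x : π, φ x = x :=
  stmt5_general π A hres φ hφ
end

section
/- Let π be a group, 𝔸 a normal subgroup of π, and (K_m)_{m≥1} the associated N-series (K_1 = π, K_2 = 𝔸 ⊔ Γ_2π, K_m = [K_{m−1}, K_1] ⊔ [K_{m−2}, K_2] for m ≥ 3). Let m ≥ 1 and let φ be an automorphism of π such that φ(x)x⁻¹ ∈ Γ_{m+1}π for every x ∈ π. Then φ(x)x⁻¹ ∈ K_m for every x ∈ π and φ(y)y⁻¹ ∈ K_{m+1} for every y ∈ K_2. (This proves the inclusion J_mℳ ⊆ J^𝔞_{m−1}ℳ; together with the previous inclusion it shows the Johnson filtration and the alternative Johnson filtration are cofinal.) -/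
/-! Comparing the recursions `Γ_{n+1} = [Γ_n, π]` and `K_{n+1} ⊇ [K_n, K_1]` gives `Γ_n π ≤ K_n`, so
`φ(x)x⁻¹ ∈ Γ_{m+1}π` lies in both `K_{m+1}` and `K_m` (the latter through `Γ_{m+1}π ≤ Γ_mπ`). -/

variable {π : Type*} [Group π]

theorem lowerCentralSeries_le_altK_succ (A : Subgroup π) :
    ∀ n, (⊤ : Subgroup π).lowerCentralSeries n ≤ altK A (n + 1)
  | 0 => (altK.eq_2 A).ge
  | 1 => by rw [altK]; exact le_sup_right
  | n + 2 => by
    rw [Subgroup.lowerCentralSeries_succ, altK]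
    exact le_sup_of_le_left <|
      Subgroup.commutator_mono (lowerCentralSeries_le_altK_succ A (n + 1)) (altK.eq_2 A).ge

theorem lowerCentralSeries_le_altK (A : Subgroup π) :
    ∀ n, (⊤ : Subgroup π).lowerCentralSeries n ≤ altK A n
  | 0 => (altK.eq_1 A).ge
  | n + 1 => (Subgroup.lowerCentralSeries_antitone _ n.le_succ).trans
      (lowerCentralSeries_le_altK_succ A n)

theorem stmt8_general (π : Type*) [Group π] (A : Subgroup π)
    (m : ℕ) (φ : π ≃* π)
    (hφ : ∀ x : π, φ x * x⁻¹ ∈ (⊤ : Subgroup π).lowerCentralSeries m) :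
    (∀ x : π, φ x * x⁻¹ ∈ altK A m) ∧
    (∀ y : π, y ∈ altK A 2 → φ y * y⁻¹ ∈ altK A (m + 1)) :=
  ⟨fun x => lowerCentralSeries_le_altK A m (hφ x),
    fun y _ => lowerCentralSeries_le_altK_succ A m (hφ y)⟩

/-- If φ is an automorphism of π with φ(x)x⁻¹ ∈ Γ_{m+1}π for every x, then
φ(x)x⁻¹ ∈ K_m for every x ∈ π and φ(y)y⁻¹ ∈ K_{m+1} for every y ∈ K₂. -/
theorem stmt8 (π : Type*) [Group π] (A : Subgroup π) (hA : A.Normal)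
    (m : ℕ) (hm : 1 ≤ m) (φ : π ≃* π)
    (hφ : ∀ x : π, φ x * x⁻¹ ∈ (⊤ : Subgroup π).lowerCentralSeries m) :
    (∀ x : π, φ x * x⁻¹ ∈ altK A m) ∧
    (∀ y : π, y ∈ altK A 2 → φ y * y⁻¹ ∈ altK A (m + 1)) :=
  stmt8_general π A m φ hφ
end
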